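/- For all u, v ∈ (0,1), the function f(u,v) = 2·ln((1−u)(1+v)/((1+u)(1−v))) − 4v(u+v)/(u(1−v²)) + 4u/(1−u²) + 4v²(2(1−u)v + (1−v)²)/(u(1−v²)²) is nonnegative, with equality on the diagonal u = v. -/

import Mathlib

/-- The function `f(u,v)` from inequality (la_8) in the paper. -/
noncomputable def fla (u v : ℝ) : ℝ :=
  2 * Real.log ((1 - u) * (1 + v) / ((1 + u) * (1 - v)))
    - 4 * v / (u * (1 - v ^ 2)) * (u + v)
    + 4 * u / (1 - u ^ 2)
    + 4 * v ^ 2 / (u * (1 - v ^ 2) ^ 2) * (2 * (1 - u) * v + (1 - v) ^ 2)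

/-!
Fix `v` and vary `u`. Up to a constant, `fla · v` is
`2 log (1 - u) - 2 log (1 + u) + 4u / (1 - u²) + c / u` with `c = 8 (v² / (1 - v²))²`, so its
derivative is `8 (g(u)² - g(v)²) / u²` for the increasing function `g(t) = t² / (1 - t²)`.
Hence `fla · v` decreases on `(0, v]` and increases on `[v, 1)`, and its minimum is `fla v v = 0`.
-/

open Real Set

lemma hasDerivAt_log_one_sub_sub_log_one_add {x : ℝ} (hx : x ∈ Ioo (-1) 1) :
    HasDerivAt (fun t => 2 * log (1 - t) - 2 * log (1 + t) + 4 * t / (1 - t ^ 2))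
      (8 * x ^ 2 / (1 - x ^ 2) ^ 2) x := by
  obtain ⟨hx₀, hx₁⟩ := hx
  have h₁ : 1 - x ≠ 0 := by linarith
  have h₂ : 1 + x ≠ 0 := by linarith
  have h₃ : 1 - x ^ 2 ≠ 0 := by nlinarith
  have := (((((hasDerivAt_id x).const_sub 1).log h₁).const_mul 2).sub
    ((((hasDerivAt_id x).const_add 1).log h₂).const_mul 2)).add
    (((hasDerivAt_id x).const_mul 4).div ((hasDerivAt_pow 2 x).const_sub 1) h₃)
  refine this.congr_deriv ?_
  simp only [id]
  field_simp
  ring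

lemma fla_eq_add_div_add {u v : ℝ} (hu : u ∈ Ioo (-1) 1) (hu₀ : u ≠ 0) (hv : v ∈ Ioo (-1) 1) :
    fla u v = (2 * log (1 - u) - 2 * log (1 + u) + 4 * u / (1 - u ^ 2))
      + 8 * (v ^ 2 / (1 - v ^ 2)) ^ 2 / u
      + (2 * log (1 + v) - 2 * log (1 - v) - 4 * v / (1 - v ^ 2)
        - 8 * v ^ 3 / (1 - v ^ 2) ^ 2) := by
  obtain ⟨hu₁, hu₂⟩ := hu
  obtain ⟨hv₁, hv₂⟩ := hv
  have hu₃ : 1 - u ^ 2 ≠ 0 := by nlinarith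
  have hv₃ : 1 - v ^ 2 ≠ 0 := by nlinarith
  have h₁ : 0 < (1 - u) * (1 + v) := by nlinarith
  have h₂ : 0 < (1 + u) * (1 - v) := by nlinarith
  rw [fla, log_div h₁.ne' h₂.ne', log_mul (by linarith) (by linarith),
    log_mul (by linarith) (by linarith)]
  field_simp
  ring

lemma hasDerivAt_fla_left {u v : ℝ} (hu : u ∈ Ioo 0 1) (hv : v ∈ Ioo (-1) 1) :
    HasDerivAt (fun x => fla x v)
      (8 * ((u ^ 2 / (1 - u ^ 2)) ^ 2 - (v ^ 2 / (1 - v ^ 2)) ^ 2) / u ^ 2) u := by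
  have hu₀ : u ≠ 0 := hu.1.ne'
  have hu₁ : 1 - u ^ 2 ≠ 0 := by nlinarith [hu.1, hu.2]
  have := ((hasDerivAt_log_one_sub_sub_log_one_add ⟨by linarith [hu.1], hu.2⟩).add
    ((hasDerivAt_inv hu₀).const_mul (8 * (v ^ 2 / (1 - v ^ 2)) ^ 2))).add_const
    (2 * log (1 + v) - 2 * log (1 - v) - 4 * v / (1 - v ^ 2) - 8 * v ^ 3 / (1 - v ^ 2) ^ 2)
  refine (this.congr_deriv ?_).congr_of_eventuallyEq ?_
  · field_simp
    ring
  · filter_upwards [isOpen_Ioo.mem_nhds hu] with x hx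
    rw [fla_eq_add_div_add ⟨by linarith [hx.1], hx.2⟩ hx.1.ne' hv, div_eq_mul_inv _ x]
    rfl

lemma sq_div_one_sub_sq_le {u v : ℝ} (hu : 0 ≤ u) (huv : u ≤ v) (hv : v < 1) :
    u ^ 2 / (1 - u ^ 2) ≤ v ^ 2 / (1 - v ^ 2) := by
  have : u ^ 2 ≤ v ^ 2 := pow_le_pow_left₀ hu huv 2
  have : v ^ 2 < 1 := by nlinarith
  gcongr

lemma fla_self {u : ℝ} (hu : u ∈ Ioo 0 1) : fla u u = 0 := by
  obtain ⟨hu₀, hu₁⟩ := hu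
  have h : 1 - u ^ 2 ≠ 0 := by nlinarith
  rw [fla, mul_comm (1 - u), div_self (by nlinarith), log_one]
  field_simp
  ring

lemma isMinOn_fla_left {v : ℝ} (hv : v ∈ Ioo 0 1) : IsMinOn (fun u => fla u v) (Ioo 0 1) v := by
  have hv' : v ∈ Ioo (-1) 1 := ⟨by linarith [hv.1], hv.2⟩
  have hderiv (x) (hx : x ∈ Ioo 0 1) := hasDerivAt_fla_left hx hv'
  have hdiff (s) (hs : s ⊆ Ioo 0 1) : DifferentiableOn ℝ (fun u => fla u v) s :=
    fun x hx => (hderiv x (hs hx)).differentiableAt.differentiableWithinAt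
  have g_nonneg (t : ℝ) (ht : t ∈ Ioo 0 1) : 0 ≤ t ^ 2 / (1 - t ^ 2) := by
    have : t ^ 2 < 1 := by nlinarith [ht.1, ht.2]
    exact div_nonneg (sq_nonneg t) (by linarith)
  refine isMinOn_Ioo_of_deriv (hderiv v hv).continuousAt
    (hdiff _ (Ioo_subset_Ioo_right hv.2.le)) (hdiff _ (Ioo_subset_Ioo_left hv.1.le)) ?_ ?_
  · intro x hx
    have hx' : x ∈ Ioo 0 1 := ⟨hx.1, hx.2.trans hv.2⟩
    rw [(hderiv x hx').deriv]
    refine div_nonpos_of_nonpos_of_nonneg (mul_nonpos_of_nonneg_of_nonpos (by norm_num) ?_)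
      (sq_nonneg x)
    exact sub_nonpos.2 (pow_le_pow_left₀ (g_nonneg x hx')
      (sq_div_one_sub_sq_le hx.1.le hx.2.le hv.2) 2)
  · intro x hx
    have hx' : x ∈ Ioo 0 1 := ⟨hv.1.trans hx.1, hx.2⟩
    rw [(hderiv x hx').deriv]
    refine div_nonneg (mul_nonneg (by norm_num) ?_) (sq_nonneg x)
    exact sub_nonneg.2 (pow_le_pow_left₀ (g_nonneg v hv)
      (sq_div_one_sub_sq_le hv.1.le hx.1.le hx.2) 2)

theorem fla_nonneg_and_diag_zero :
    (∀ u v : ℝ, u ∈ Set.Ioo (0:ℝ) 1 → v ∈ Set.Ioo (0:ℝ) 1 → 0 ≤ fla u v) ∧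
    (∀ u : ℝ, u ∈ Set.Ioo (0:ℝ) 1 → fla u u = 0) :=
  ⟨fun _ _ hu hv => fla_self hv ▸ isMinOn_fla_left hv hu, fun _ => fla_self⟩
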